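/- Let k be a field and C a k-linear additive category. Let S be a subset of the objects of C such that every object of C is isomorphic to a finite direct sum of copies of objects in S. Then the inclusion of the full subcategory C|_S on the objects S into C induces an isomorphism of k-vector spaces Tr(C|_S) ≅ Tr(C). -/

import Mathlib

open CategoryTheory CategoryTheory.Limits

universe v u v' u'

variable (k : Type*) [Field k]

/-- The submodule of commutator relations defining the trace of a `k`-linear category. -/
noncomputable def traceRel (C : Type u) [Category.{v} C] [Preadditive C]
    [CategoryTheory.Linear k C] : Submodule k (DirectSum C fun x : C => x ⟶ x) :=
  letI := Classical.decEq C
  Submodule.span k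
    {z | ∃ (x y : C) (f : x ⟶ y) (g : y ⟶ x),
      z = DirectSum.of (fun w : C => w ⟶ w) x (f ≫ g)
        - DirectSum.of (fun w : C => w ⟶ w) y (g ≫ f)}

/-- The trace (zeroth Hochschild–Mitchell homology) of a `k`-linear category:
`(⊕ₓ End x) / span{fg - gf}`. -/
noncomputable abbrev Trace (C : Type u) [Category.{v} C] [Preadditive C]
    [CategoryTheory.Linear k C] : Type _ :=
  (DirectSum C fun x : C => x ⟶ x) ⧸ traceRel k C

/-- The class `[f]` of an endomorphism `f : x ⟶ x` in the trace. -/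
noncomputable def traceMk {C : Type u} [Category.{v} C] [Preadditive C]
    [CategoryTheory.Linear k C] {x : C} (f : x ⟶ x) : Trace k C :=
  letI := Classical.decEq C
  Submodule.Quotient.mk (DirectSum.of (fun w : C => w ⟶ w) x f)

/-- The `k`-linear map `Tr(F) : Tr(C) → Tr(D)` induced by a `k`-linear functor `F : C ⥤ D`,
sending `[f]` to `[F.map f]`. -/
noncomputable def traceMap {C : Type u} [Category.{v} C] [Preadditive C]
    [CategoryTheory.Linear k C] {D : Type u'} [Category.{v'} D] [Preadditive D]
    [CategoryTheory.Linear k D] (F : C ⥤ D) [F.Additive] [F.Linear k] :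
    Trace k C →ₗ[k] Trace k D :=
  letI := Classical.decEq C
  letI := Classical.decEq D
  Submodule.liftQ (traceRel k C)
    (DirectSum.toModule k C (Trace k D)
      (fun x => (traceRel k D).mkQ ∘ₗ
        (DirectSum.lof k D (fun w : D => w ⟶ w) (F.obj x)) ∘ₗ (F.mapLinearMap k)))
    (by
      rw [traceRel, Submodule.span_le]
      rintro z ⟨x, y, f, g, rfl⟩
      simp only [SetLike.mem_coe, LinearMap.mem_ker, map_sub]
      rw [← DirectSum.lof_eq_of k, ← DirectSum.lof_eq_of k,
        DirectSum.toModule_lof, DirectSum.toModule_lof]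
      simp only [LinearMap.comp_apply, Functor.coe_mapLinearMap]
      rw [sub_eq_zero]
      simp only [Submodule.mkQ_apply]
      rw [Submodule.Quotient.eq, traceRel]
      refine Submodule.subset_span ⟨F.obj x, F.obj y, F.map f, F.map g, ?_⟩
      rw [DirectSum.lof_eq_of k, DirectSum.lof_eq_of k, F.map_comp, F.map_comp])


/-
Write `x ≅ ⨁ aᵢ` with projections `pᵢ` and inclusions `qᵢ`, so that `∑ pᵢ ≫ qᵢ = 𝟙 x`. Then
`[h] = ∑ [h ≫ pᵢ ≫ qᵢ] = ∑ [qᵢ ≫ h ≫ pᵢ]`, a sum of classes of endomorphisms of the `aᵢ ∈ S`.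
Conversely `[h] ↦ ∑ [qᵢ ≫ h ≫ pᵢ]` is well defined on `Tr(C)`: for `f : x ⟶ y`, `g : y ⟶ x`,
inserting `∑ p'ⱼ ≫ q'ⱼ = 𝟙 y` between `f` and `g` (resp. `∑ pᵢ ≫ qᵢ = 𝟙 x` between `g` and `f`)
turns `[f ≫ g]` and `[g ≫ f]` into double sums that agree term by term up to a cyclic
permutation, which is invisible in the trace of `C|_S`.
-/

section Trace

variable {k}
variable {C : Type u} [Category.{v} C] [Preadditive C] [CategoryTheory.Linear k C]

variable (k) in
noncomputable def traceMkₗ (x : C) : (x ⟶ x) →ₗ[k] Trace k C :=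
  letI := Classical.decEq C
  (traceRel k C).mkQ ∘ₗ DirectSum.lof k C (fun w : C => w ⟶ w) x

@[simp]
lemma traceMkₗ_apply {x : C} (f : x ⟶ x) : traceMkₗ k x f = traceMk k f := rfl

lemma traceMk_sum {x : C} {ι : Type*} (s : Finset ι) (f : ι → (x ⟶ x)) :
    traceMk k (∑ i ∈ s, f i) = ∑ i ∈ s, traceMk k (f i) := by
  simp only [← traceMkₗ_apply, map_sum]

lemma traceMk_comp_comm {x y : C} (f : x ⟶ y) (g : y ⟶ x) :
    traceMk k (f ≫ g) = traceMk k (g ≫ f) :=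
  (Submodule.Quotient.eq _).mpr (Submodule.subset_span ⟨x, y, f, g, rfl⟩)

section Lift

variable {M : Type*} [AddCommGroup M] [Module k M]

noncomputable def Trace.lift (φ : ∀ x : C, (x ⟶ x) →ₗ[k] M)
    (hφ : ∀ (x y : C) (f : x ⟶ y) (g : y ⟶ x), φ x (f ≫ g) = φ y (g ≫ f)) :
    Trace k C →ₗ[k] M :=
  letI := Classical.decEq C
  (traceRel k C).liftQ (DirectSum.toModule k C M φ) <| by
    rw [traceRel, Submodule.span_le]
    rintro _ ⟨x, y, f, g, rfl⟩
    rw [SetLike.mem_coe, LinearMap.mem_ker, map_sub, ← DirectSum.lof_eq_of k,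
      ← DirectSum.lof_eq_of k, DirectSum.toModule_lof, DirectSum.toModule_lof, hφ, sub_self]

@[simp]
lemma Trace.lift_traceMk (φ : ∀ x : C, (x ⟶ x) →ₗ[k] M)
    (hφ : ∀ (x y : C) (f : x ⟶ y) (g : y ⟶ x), φ x (f ≫ g) = φ y (g ≫ f)) {x : C}
    (f : x ⟶ x) : Trace.lift φ hφ (traceMk k f) = φ x f := by
  rw [traceMk, Trace.lift, Submodule.liftQ_apply, ← DirectSum.lof_eq_of k,
    DirectSum.toModule_lof]

lemma Trace.linearMap_ext {φ ψ : Trace k C →ₗ[k] M}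
    (h : ∀ (x : C) (f : x ⟶ x), φ (traceMk k f) = ψ (traceMk k f)) : φ = ψ := by
  classical
  exact Submodule.linearMap_qext _ <| DirectSum.linearMap_ext k fun x => LinearMap.ext (h x)

end Lift

@[simp]
lemma traceMap_traceMk {D : Type u'} [Category.{v'} D] [Preadditive D]
    [CategoryTheory.Linear k D] (F : C ⥤ D) [F.Additive] [F.Linear k] {x : C} (f : x ⟶ x) :
    traceMap k F (traceMk k f) = traceMk k (F.map f) := by
  rw [traceMk, traceMap, Submodule.liftQ_apply, ← DirectSum.lof_eq_of k, DirectSum.toModule_lof]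
  rfl

lemma comp_eq_sum_of_sum_comp_eq_id {x y z : C} {ι : Type*} [Fintype ι] {a : ι → C}
    {p : ∀ i, y ⟶ a i} {q : ∀ i, a i ⟶ y} (hpq : ∑ i, p i ≫ q i = 𝟙 y) (f : x ⟶ y)
    (g : y ⟶ z) : f ≫ g = ∑ i, (f ≫ p i) ≫ (q i ≫ g) := by
  calc f ≫ g = f ≫ (∑ i, p i ≫ q i) ≫ g := by rw [hpq, Category.id_comp]
    _ = _ := by simp only [Preadditive.sum_comp, Preadditive.comp_sum, Category.assoc]

lemma traceMk_eq_sum_of_sum_comp_eq_id {x : C} {ι : Type*} [Fintype ι] {a : ι → C}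
    {p : ∀ i, x ⟶ a i} {q : ∀ i, a i ⟶ x} (hpq : ∑ i, p i ≫ q i = 𝟙 x) (h : x ⟶ x) :
    traceMk k h = ∑ i, traceMk k (q i ≫ h ≫ p i) := by
  calc traceMk k h = traceMk k (h ≫ 𝟙 x) := by rw [Category.comp_id]
    _ = ∑ i, traceMk k ((h ≫ p i) ≫ q i) := by
      rw [comp_eq_sum_of_sum_comp_eq_id hpq, traceMk_sum]
      simp only [Category.comp_id]
    _ = ∑ i, traceMk k (q i ≫ h ≫ p i) := by
      simp only [traceMk_comp_comm _ (q _)]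

end Trace

section FullyFaithful

variable {k} {C : Type u} [Category.{v} C] [Preadditive C] [CategoryTheory.Linear k C]
  {D : Type u'} [Category.{v'} D] [Preadditive D] [CategoryTheory.Linear k D]

/-- `x` as a retract of `⨁ᵢ F.obj (obj i)`: only `∑ π i ≫ ι i = 𝟙 x` is required, not
`ι i ≫ π j = δᵢⱼ`. -/
structure SummandOfFiniteSum (F : D ⥤ C) (x : C) where
  n : ℕ
  obj : Fin n → D
  π : ∀ i, x ⟶ F.obj (obj i)
  ι : ∀ i, F.obj (obj i) ⟶ x
  sum_π_ι : ∑ i, π i ≫ ι i = 𝟙 x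

variable {F : D ⥤ C}

noncomputable def SummandOfFiniteSum.ofIso [HasFiniteBiproducts C] {x : C} {n : ℕ}
    (a : Fin n → D) (e : x ≅ ⨁ fun i => F.obj (a i)) : SummandOfFiniteSum F x where
  n := n
  obj := a
  π i := e.hom ≫ biproduct.π _ i
  ι i := biproduct.ι (fun i => F.obj (a i)) i ≫ e.inv
  sum_π_ι := by rw [← comp_eq_sum_of_sum_comp_eq_id biproduct.total, e.hom_inv_id]

lemma SummandOfFiniteSum.sum_preimage_π_ι [F.Full] [F.Faithful] [F.Additive] {a : D}
    (d : SummandOfFiniteSum F (F.obj a)) :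
    ∑ i, F.preimage (d.π i) ≫ F.preimage (d.ι i) = 𝟙 a :=
  F.map_injective (by simp [d.sum_π_ι])

variable (k F) in
noncomputable def CategoryTheory.Functor.preimageₗ [F.Full] [F.Faithful] [F.Additive]
    [F.Linear k] (a b : D) : (F.obj a ⟶ F.obj b) →ₗ[k] (a ⟶ b) :=
  (LinearEquiv.ofBijective (F.mapLinearMap k) ⟨F.map_injective, F.map_surjective⟩).symm.toLinearMap

@[simp]
lemma CategoryTheory.Functor.preimageₗ_apply [F.Full] [F.Faithful] [F.Additive] [F.Linear k]
    {a b : D} (f : F.obj a ⟶ F.obj b) : F.preimageₗ k a b f = F.preimage f :=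
  F.map_injective <| ((LinearEquiv.ofBijective (F.mapLinearMap k) _).apply_symm_apply f).trans
    (F.map_preimage f).symm

variable [F.Full] [F.Faithful] [F.Additive] [F.Linear k]

variable (k) in
noncomputable def SummandOfFiniteSum.traceConj {x : C} (d : SummandOfFiniteSum F x) :
    (x ⟶ x) →ₗ[k] Trace k D :=
  ∑ i, traceMkₗ k (d.obj i) ∘ₗ F.preimageₗ k _ _ ∘ₗ Linear.rightComp k _ (d.π i) ∘ₗ
    Linear.leftComp k x (d.ι i)

lemma SummandOfFiniteSum.traceConj_apply {x : C} (d : SummandOfFiniteSum F x) (h : x ⟶ x) :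
    d.traceConj k h = ∑ i, traceMk k (F.preimage (d.ι i ≫ h ≫ d.π i)) := by
  simp [traceConj]

lemma SummandOfFiniteSum.traceConj_comp {x y : C} (dx : SummandOfFiniteSum F x)
    (dy : SummandOfFiniteSum F y) (f : x ⟶ y) (g : y ⟶ x) :
    dx.traceConj k (f ≫ g) = ∑ i, ∑ j,
      traceMk k (F.preimage (dx.ι i ≫ f ≫ dy.π j) ≫ F.preimage (dy.ι j ≫ g ≫ dx.π i)) := by
  rw [traceConj_apply]
  refine Finset.sum_congr rfl fun i _ => ?_
  rw [← traceMk_sum]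
  congr 1
  refine F.map_injective ?_
  rw [F.map_preimage, F.map_sum]
  simp only [F.map_comp, F.map_preimage, Category.assoc]
  simpa only [Category.assoc] using
    comp_eq_sum_of_sum_comp_eq_id dy.sum_π_ι (dx.ι i ≫ f) (g ≫ dx.π i)

lemma SummandOfFiniteSum.traceConj_comp_comm {x y : C} (dx : SummandOfFiniteSum F x)
    (dy : SummandOfFiniteSum F y) (f : x ⟶ y) (g : y ⟶ x) :
    dx.traceConj k (f ≫ g) = dy.traceConj k (g ≫ f) := by
  rw [dx.traceConj_comp dy, dy.traceConj_comp dx, Finset.sum_comm]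
  exact Finset.sum_congr rfl fun j _ => Finset.sum_congr rfl fun i _ => traceMk_comp_comm _ _

variable (k) in
noncomputable def traceMapInv (d : ∀ x, SummandOfFiniteSum F x) : Trace k C →ₗ[k] Trace k D :=
  Trace.lift (fun x => (d x).traceConj k) fun x y f g => (d x).traceConj_comp_comm (d y) f g

lemma traceMapInv_comp_traceMap (d : ∀ x, SummandOfFiniteSum F x) :
    traceMapInv k d ∘ₗ traceMap k F = LinearMap.id := by
  refine Trace.linearMap_ext fun a h => ?_
  rw [LinearMap.comp_apply, traceMap_traceMk, traceMapInv, Trace.lift_traceMk,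
    SummandOfFiniteSum.traceConj_apply, LinearMap.id_apply,
    traceMk_eq_sum_of_sum_comp_eq_id (d (F.obj a)).sum_preimage_π_ι h]
  refine Finset.sum_congr rfl fun i _ => congrArg (traceMk k) (F.map_injective ?_)
  simp

lemma traceMap_comp_traceMapInv (d : ∀ x, SummandOfFiniteSum F x) :
    traceMap k F ∘ₗ traceMapInv k d = LinearMap.id := by
  refine Trace.linearMap_ext fun x h => ?_
  simp [traceMapInv, SummandOfFiniteSum.traceConj_apply,
    ← traceMk_eq_sum_of_sum_comp_eq_id (d x).sum_π_ι h]

theorem traceMap_bijective_of_summandOfFiniteSum (d : ∀ x, SummandOfFiniteSum F x) :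
    Function.Bijective (traceMap k F) :=
  Function.bijective_iff_has_inverse.mpr ⟨traceMapInv k d,
    LinearMap.congr_fun (traceMapInv_comp_traceMap d),
    LinearMap.congr_fun (traceMap_comp_traceMapInv d)⟩

end FullyFaithful

/-- If every object of a `k`-linear additive category `C` is isomorphic to a
finite direct sum of copies of objects in `S ⊆ Ob C`, then the inclusion of the full
subcategory `C|_S` into `C` induces an isomorphism `Tr(C|_S) ≅ Tr(C)`. -/
theorem trace_fullSubcategoryInclusion_bijective
    (C : Type u) [Category.{v} C] [Preadditive C] [CategoryTheory.Linear k C]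
    [HasFiniteBiproducts C] (S : Set C)
    (hS : ∀ x : C, ∃ (n : ℕ) (f : Fin n → C), (∀ i, f i ∈ S) ∧ Nonempty (x ≅ ⨁ f)) :
    Function.Bijective (traceMap k (ObjectProperty.ι (· ∈ S))) := by
  choose n f hf he using hS
  exact traceMap_bijective_of_summandOfFiniteSum fun x =>
    .ofIso (F := ObjectProperty.ι (· ∈ S)) (fun i => ⟨f x i, hf x i⟩) (he x).some
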